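/- (Rodrigues formula.) Let μ > −1/2 be real, λ ∈ ℂ, n ∈ ℕ. Define g_0 : ℝ → ℂ by g_0(x) = exp(−λ²x²) and inductively g_{j+1} = D_μ g_j on ℝ∖{0}. Then for every x ≠ 0, (−1)^n exp(λ²x²) g_n(x) = λ^n (γ_μ(n)/n!) H_n^μ(λx). -/

import Mathlib

open MeasureTheory
open scoped BigOperators Nat

/-- Generalized factorial `γ_μ(n)`: `γ_μ(0) = 1`,
`γ_μ(n+1) = (n + 1 + 2μ θ_{n+1}) γ_μ(n)` where `θ_k = 1` if `k` is odd, `0` if even. -/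
noncomputable def genGamma (μ : ℝ) : ℕ → ℝ
  | 0 => 1
  | n + 1 => ((n : ℝ) + 1 + 2 * μ * (if (n + 1) % 2 = 1 then (1 : ℝ) else 0)) * genGamma μ n

/-- Generalized exponential function `e_μ(z) = Σ_{n≥0} z^n / γ_μ(n)`. -/
noncomputable def genExp (μ : ℝ) (z : ℂ) : ℂ :=
  ∑' n : ℕ, z ^ n / (genGamma μ n : ℂ)

/-- Generalized Hermite polynomial
`H_n^μ(x) = n! Σ_{k=0}^{⌊n/2⌋} (-1)^k (2x)^{n-2k} / (k! γ_μ(n-2k))`. -/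
noncomputable def genHermite (μ : ℝ) (n : ℕ) (x : ℂ) : ℂ :=
  (n ! : ℂ) * ∑ k ∈ Finset.range (n / 2 + 1),
    (-1) ^ k * (2 * x) ^ (n - 2 * k) / ((k ! : ℂ) * ((genGamma μ (n - 2 * k) : ℝ) : ℂ))

/-- Dunkl operator `(D_μ f)(x) = f'(x) + (μ/x)(f(x) - f(-x))`. -/
noncomputable def dunkl (μ : ℝ) (f : ℝ → ℂ) (x : ℝ) : ℂ :=
  deriv f x + ((μ / x : ℝ) : ℂ) * (f x - f (-x))

/-- Euler beta function `B(a,b) = Γ(a)Γ(b)/Γ(a+b)`. -/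
noncomputable def realBeta (a b : ℝ) : ℝ :=
  Real.Gamma a * Real.Gamma b / Real.Gamma (a + b)

/-! The Gaussian `E(y) = exp(-λ²y²)` is even, so the Dunkl operator acts on `P·E` as a twisted
derivation: `D_μ(P·E) = (D_μ P - 2λ²x P)·E`. Hence `D_μ^n E = P_n·E` with polynomials `P_n`
satisfying `P_{n+1} = D_μ P_n - 2λ²x P_n`. On monomials `D_μ x^m = (m + 2μθ_m) x^(m-1)`, and
`m + 2μθ_m` is exactly the ratio `γ_μ(m)/γ_μ(m-1)`, so this recursion is solved coefficientwise
by `(-1)^n λ^n (γ_μ(n)/n!) H_n^μ(λx)`; the one nontrivial identity behind it is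
`(m + 2j) + 2μθ_(m+2j) = (m + 2μθ_m) + 2j`. -/

open Finset

noncomputable def genGammaStep (μ : ℝ) (m : ℕ) : ℝ :=
  m + 2 * μ * (if m % 2 = 1 then 1 else 0)

theorem genGamma_succ (μ : ℝ) (n : ℕ) :
    genGamma μ (n + 1) = genGammaStep μ (n + 1) * genGamma μ n := by
  simp [genGamma, genGammaStep]

theorem genGammaStep_zero (μ : ℝ) : genGammaStep μ 0 = 0 := by
  simp [genGammaStep]

theorem genGammaStep_add_two_mul (μ : ℝ) (m j : ℕ) :
    genGammaStep μ (m + 2 * j) = genGammaStep μ m + 2 * j := by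
  simp only [genGammaStep, Nat.add_mul_mod_self_left]
  push_cast; ring

theorem genGammaStep_succ_pos {μ : ℝ} (hμ : -(1 / 2) < μ) (m : ℕ) :
    0 < genGammaStep μ (m + 1) := by
  unfold genGammaStep
  split_ifs <;> push_cast <;> linarith [(m.cast_nonneg : (0 : ℝ) ≤ m)]

theorem genGamma_pos {μ : ℝ} (hμ : -(1 / 2) < μ) (n : ℕ) : 0 < genGamma μ n := by
  induction n with
  | zero => simp [genGamma]
  | succ n ih => rw [genGamma_succ]; exact mul_pos (genGammaStep_succ_pos hμ n) ih

theorem dunkl_congr (μ : ℝ) {f g : ℝ → ℂ} {x : ℝ} (hfg : ∀ y ≠ 0, f y = g y) (hx : x ≠ 0) :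
    dunkl μ f x = dunkl μ g x := by
  have hev : f =ᶠ[nhds x] g :=
    Filter.mem_of_superset (isOpen_ne.mem_nhds hx) fun y hy => hfg y hy
  rw [dunkl, dunkl, hev.deriv_eq, hfg x hx, hfg (-x) (neg_ne_zero.2 hx)]

theorem dunkl_const_mul (μ : ℝ) (c : ℂ) (f : ℝ → ℂ) (x : ℝ) :
    dunkl μ (fun y => c * f y) x = c * dunkl μ f x := by
  simp only [dunkl, deriv_const_mul_field']; ring

theorem dunkl_finset_sum {ι : Type*} (μ : ℝ) (s : Finset ι) (f : ι → ℝ → ℂ) {x : ℝ}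
    (hf : ∀ i ∈ s, DifferentiableAt ℝ (f i) x) :
    dunkl μ (fun y => ∑ i ∈ s, f i y) x = ∑ i ∈ s, dunkl μ (f i) x := by
  simp only [dunkl, deriv_fun_sum hf, ← sum_sub_distrib, mul_sum, sum_add_distrib]

theorem dunkl_mul_of_even (μ : ℝ) {f g : ℝ → ℂ} {x : ℝ} (hf : DifferentiableAt ℝ f x)
    (hg : DifferentiableAt ℝ g x) (hg_even : g (-x) = g x) :
    dunkl μ (fun y => f y * g y) x = dunkl μ f x * g x + f x * deriv g x := by
  simp only [dunkl, deriv_fun_mul hf hg, hg_even]; ring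

theorem dunkl_pow (μ : ℝ) (m : ℕ) {x : ℝ} (hx : x ≠ 0) :
    dunkl μ (fun y => (y : ℂ) ^ m) x = genGammaStep μ m * (x : ℂ) ^ (m - 1) := by
  have hxC : (x : ℂ) ≠ 0 := Complex.ofReal_ne_zero.2 hx
  rw [dunkl, ((hasDerivAt_pow m (x : ℂ)).comp_ofReal).deriv, genGammaStep]
  rcases m.even_or_odd with hm | hm
  · rw [Complex.ofReal_neg, hm.neg_pow, if_neg (by rw [Nat.even_iff.1 hm]; decide)]
    push_cast; ring
  · obtain ⟨j, rfl⟩ := hm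
    rw [Complex.ofReal_neg, Odd.neg_pow ⟨j, rfl⟩, if_pos (by omega)]
    push_cast
    simp only [pow_succ]
    field_simp
    ring

/-- The coefficient of `x ^ m` in `P_(m+2k)`, where `D_μ^n exp(-λ²x²) = P_n(x) exp(-λ²x²)`. -/
noncomputable def rodriguesCoeff (μ : ℝ) (lam : ℂ) (k m : ℕ) : ℂ :=
  (-1) ^ (m + k) * lam ^ (2 * (m + k)) * 2 ^ m * genGamma μ (m + 2 * k) / (k ! * genGamma μ m)

section rodriguesCoeff

variable {μ : ℝ} (hμ : -(1 / 2) < μ) (lam : ℂ)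
include hμ

theorem genGamma_ne_zero (n : ℕ) : (genGamma μ n : ℂ) ≠ 0 :=
  Complex.ofReal_ne_zero.2 (genGamma_pos hμ n).ne'

theorem genGammaStep_succ_ne_zero (m : ℕ) : (genGammaStep μ (m + 1) : ℂ) ≠ 0 :=
  Complex.ofReal_ne_zero.2 (genGammaStep_succ_pos hμ m).ne'

theorem rodriguesCoeff_zero_left (m : ℕ) : rodriguesCoeff μ lam 0 m = (-2 * lam ^ 2) ^ m := by
  simp only [rodriguesCoeff, add_zero, mul_zero, Nat.factorial_zero, Nat.cast_one, one_mul]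
  rw [mul_div_assoc, div_self (genGamma_ne_zero hμ m), mul_one, mul_pow, ← pow_mul,
    show (-2 : ℂ) = -1 * 2 by norm_num, mul_pow]
  ring

theorem rodriguesCoeff_succ_zero (k : ℕ) :
    rodriguesCoeff μ lam (k + 1) 0 = genGammaStep μ 1 * rodriguesCoeff μ lam k 1 := by
  have hd : genGammaStep μ (1 + 2 * k + 1) = 2 * k + 2 := by
    rw [show 1 + 2 * k + 1 = 0 + 2 * (k + 1) by ring, genGammaStep_add_two_mul, genGammaStep_zero]
    push_cast; ring
  have hγ1 : genGamma μ 1 = genGammaStep μ 1 := by rw [genGamma_succ, genGamma, mul_one]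
  simp only [rodriguesCoeff, show 0 + 2 * (k + 1) = 1 + 2 * k + 1 by ring,
    genGamma_succ μ (1 + 2 * k), hd, hγ1, show genGamma μ 0 = 1 from rfl, Nat.factorial_succ]
  have h1 : (genGammaStep μ 1 : ℂ) ≠ 0 := genGammaStep_succ_ne_zero hμ 0
  have h2 := genGamma_ne_zero hμ (1 + 2 * k)
  push_cast
  field_simp
  ring

theorem rodriguesCoeff_succ_succ (k m : ℕ) :
    rodriguesCoeff μ lam (k + 1) (m + 1)
      = genGammaStep μ (m + 2) * rodriguesCoeff μ lam k (m + 2)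
        - 2 * lam ^ 2 * rodriguesCoeff μ lam (k + 1) m := by
  have hd : genGammaStep μ (m + 2 * (k + 1) + 1) = genGammaStep μ (m + 1) + 2 * (k + 1) := by
    rw [show m + 2 * (k + 1) + 1 = m + 1 + 2 * (k + 1) by ring, genGammaStep_add_two_mul]
    push_cast; ring
  simp only [rodriguesCoeff, show m + 1 + 2 * (k + 1) = m + 2 * (k + 1) + 1 by ring,
    show m + 2 + 2 * k = m + 2 * (k + 1) by ring, genGamma_succ μ (m + 2 * (k + 1)), hd,
    genGamma_succ μ (m + 1), genGamma_succ μ m, Nat.factorial_succ]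
  have hm1 := genGammaStep_succ_ne_zero hμ m
  have hm2 := genGammaStep_succ_ne_zero hμ (m + 1)
  have hγ := genGamma_ne_zero hμ m
  push_cast
  field_simp
  ring

end rodriguesCoeff

/-- Indexed as in `genHermite` (`k`-th coefficient of `P_n`), but extended by `0` beyond `n / 2`
so that the sums below can run over `range (n + 1)` whatever the parity of `n`. -/
noncomputable def rodriguesPolyCoeff (μ : ℝ) (lam : ℂ) (n k : ℕ) : ℂ :=
  if 2 * k ≤ n then rodriguesCoeff μ lam k (n - 2 * k) else 0

noncomputable def rodriguesPoly (μ : ℝ) (lam : ℂ) (n : ℕ) (z : ℂ) : ℂ :=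
  ∑ k ∈ range (n + 1), rodriguesPolyCoeff μ lam n k * z ^ (n - 2 * k)

section rodriguesPoly

variable {μ : ℝ} (lam : ℂ)

theorem rodriguesPolyCoeff_of_lt {n k : ℕ} (h : n < 2 * k) : rodriguesPolyCoeff μ lam n k = 0 :=
  if_neg (by omega)

theorem dunkl_rodriguesPoly (n : ℕ) {x : ℝ} (hx : x ≠ 0) :
    dunkl μ (fun y => rodriguesPoly μ lam n y) x
      = ∑ k ∈ range (n + 1),
          genGammaStep μ (n - 2 * k) * rodriguesPolyCoeff μ lam n k
            * (x : ℂ) ^ (n - 2 * k - 1) := by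
  unfold rodriguesPoly
  rw [dunkl_finset_sum μ _ _ fun k _ => by fun_prop]
  refine sum_congr rfl fun k _ => ?_
  rw [dunkl_const_mul, dunkl_pow μ _ hx]
  ring

variable (hμ : -(1 / 2) < μ)
include hμ

theorem rodriguesPolyCoeff_succ_zero (n : ℕ) :
    rodriguesPolyCoeff μ lam (n + 1) 0 = -2 * lam ^ 2 * rodriguesPolyCoeff μ lam n 0 := by
  simp only [rodriguesPolyCoeff, mul_zero, zero_le, if_true, Nat.sub_zero,
    rodriguesCoeff_zero_left hμ, pow_succ']

theorem rodriguesPolyCoeff_succ_succ (n k : ℕ) :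
    rodriguesPolyCoeff μ lam (n + 1) (k + 1)
      = genGammaStep μ (n - 2 * k) * rodriguesPolyCoeff μ lam n k
        - 2 * lam ^ 2 * rodriguesPolyCoeff μ lam n (k + 1) := by
  unfold rodriguesPolyCoeff
  by_cases h : 2 * k + 2 ≤ n
  · obtain ⟨m, rfl⟩ := Nat.exists_eq_add_of_le' h
    rw [if_pos (by omega), if_pos (by omega), if_pos (by omega),
      show m + (2 * k + 2) + 1 - 2 * (k + 1) = m + 1 by omega,
      show m + (2 * k + 2) - 2 * k = m + 2 by omega,
      show m + (2 * k + 2) - 2 * (k + 1) = m by omega]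
    exact rodriguesCoeff_succ_succ hμ lam k m
  rw [if_neg (show ¬ 2 * (k + 1) ≤ n by omega), mul_zero, sub_zero]
  rcases (show n = 2 * k + 1 ∨ n ≤ 2 * k by omega) with rfl | h'
  · rw [if_pos (by omega), if_pos (by omega), show 2 * k + 1 + 1 - 2 * (k + 1) = 0 by omega,
      show 2 * k + 1 - 2 * k = 1 by omega]
    exact rodriguesCoeff_succ_zero hμ lam k
  · rw [if_neg (by omega)]
    split_ifs with h2k
    · rw [show n - 2 * k = 0 by omega, genGammaStep_zero, Complex.ofReal_zero, zero_mul]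
    · rw [mul_zero]

theorem rodriguesPoly_succ (n : ℕ) (z : ℂ) :
    rodriguesPoly μ lam (n + 1) z
      = ∑ k ∈ range (n + 1),
          genGammaStep μ (n - 2 * k) * rodriguesPolyCoeff μ lam n k * z ^ (n - 2 * k - 1)
        - 2 * lam ^ 2 * z * rodriguesPoly μ lam n z := by
  have hterm : ∀ k, rodriguesPolyCoeff μ lam (n + 1) (k + 1) * z ^ (n + 1 - 2 * (k + 1))
      = genGammaStep μ (n - 2 * k) * rodriguesPolyCoeff μ lam n k * z ^ (n - 2 * k - 1)
        - 2 * lam ^ 2 * z * (rodriguesPolyCoeff μ lam n (k + 1) * z ^ (n - 2 * (k + 1))) := by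
    intro k
    rw [rodriguesPolyCoeff_succ_succ lam hμ, show n + 1 - 2 * (k + 1) = n - 2 * k - 1 by omega]
    rcases le_or_gt (2 * (k + 1)) n with h | h
    · rw [show n - 2 * k - 1 = n - 2 * (k + 1) + 1 by omega, pow_succ]
      ring
    · rw [rodriguesPolyCoeff_of_lt lam h]
      ring
  have hshift : rodriguesPoly μ lam n z
      = ∑ k ∈ range (n + 1), rodriguesPolyCoeff μ lam n (k + 1) * z ^ (n - 2 * (k + 1))
        + rodriguesPolyCoeff μ lam n 0 * z ^ n := by
    rw [rodriguesPoly, sum_range_succ', sum_range_succ _ n,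
      rodriguesPolyCoeff_of_lt lam (by omega : n < 2 * (n + 1))]
    simp
  rw [rodriguesPoly, sum_range_succ', sum_congr rfl fun k _ => hterm k, sum_sub_distrib,
    ← mul_sum, hshift, rodriguesPolyCoeff_succ_zero lam hμ, Nat.mul_zero, Nat.sub_zero, pow_succ]
  ring

end rodriguesPoly

theorem hasDerivAt_gaussian (lam : ℂ) (x : ℝ) :
    HasDerivAt (fun y : ℝ => Complex.exp (-(lam ^ 2) * (y : ℂ) ^ 2))
      (-2 * lam ^ 2 * x * Complex.exp (-(lam ^ 2) * (x : ℂ) ^ 2)) x := by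
  have h := ((hasDerivAt_pow 2 (x : ℂ)).const_mul (-(lam ^ 2))).comp_ofReal.cexp
  convert h using 1
  push_cast; ring

theorem dunkl_mul_gaussian (μ : ℝ) (lam : ℂ) {f : ℝ → ℂ} {x : ℝ} (hf : DifferentiableAt ℝ f x) :
    dunkl μ (fun y => f y * Complex.exp (-(lam ^ 2) * (y : ℂ) ^ 2)) x
      = (dunkl μ f x - 2 * lam ^ 2 * x * f x) * Complex.exp (-(lam ^ 2) * (x : ℂ) ^ 2) := by
  rw [dunkl_mul_of_even μ hf (hasDerivAt_gaussian lam x).differentiableAt (by push_cast; ring_nf),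
    (hasDerivAt_gaussian lam x).deriv]
  ring

theorem iterate_dunkl_gaussian {μ : ℝ} (hμ : -(1 / 2) < μ) (lam : ℂ) (n : ℕ) {x : ℝ}
    (hx : x ≠ 0) :
    (dunkl μ)^[n] (fun y => Complex.exp (-(lam ^ 2) * (y : ℂ) ^ 2)) x
      = rodriguesPoly μ lam n x * Complex.exp (-(lam ^ 2) * (x : ℂ) ^ 2) := by
  induction n generalizing x with
  | zero =>
    simp [rodriguesPoly, rodriguesPolyCoeff, rodriguesCoeff_zero_left hμ]
  | succ n ih =>
    rw [Function.iterate_succ_apply', dunkl_congr μ (fun y hy => ih hy) hx,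
      dunkl_mul_gaussian μ lam (by unfold rodriguesPoly; fun_prop), dunkl_rodriguesPoly lam n hx,
      rodriguesPoly_succ lam hμ]

theorem neg_one_pow_mul_rodriguesPoly {μ : ℝ} (hμ : -(1 / 2) < μ) (lam : ℂ) (n : ℕ) (z : ℂ) :
    (-1) ^ n * rodriguesPoly μ lam n z
      = lam ^ n * ((genGamma μ n : ℂ) / (n ! : ℂ)) * genHermite μ n (lam * z) := by
  have hrange : rodriguesPoly μ lam n z
      = ∑ k ∈ range (n / 2 + 1), rodriguesPolyCoeff μ lam n k * z ^ (n - 2 * k) := by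
    refine (sum_subset (range_subset_range.2 (by omega)) fun k hk hk' => ?_).symm
    simp only [mem_range] at hk hk'
    rw [rodriguesPolyCoeff_of_lt lam (by omega), zero_mul]
  rw [hrange, genHermite, mul_sum, mul_sum, mul_sum]
  refine sum_congr rfl fun k hk => ?_
  obtain ⟨m, rfl⟩ : ∃ m, n = m + 2 * k := ⟨n - 2 * k, by simp at hk; omega⟩
  rw [rodriguesPolyCoeff, if_pos (by omega), Nat.add_sub_cancel, rodriguesCoeff]
  have hsign : ((-1 : ℂ)) ^ (m + 2 * k) * (-1) ^ (m + k) = (-1) ^ k := by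
    rw [← pow_add, show m + 2 * k + (m + k) = 2 * (m + k) + k by ring, pow_add, pow_mul]
    norm_num
  rw [← hsign]
  have := genGamma_ne_zero hμ m
  have := (m + 2 * k).factorial_ne_zero
  field_simp
  ring

/-- Rodrigues formula: for `μ > -1/2`, `λ ∈ ℂ`, `n ∈ ℕ`,
with `g_0(x) = exp(-λ²x²)` and `g_{j+1} = D_μ g_j`, one has for every `x ≠ 0`:
`(-1)^n exp(λ²x²) g_n(x) = λ^n (γ_μ(n)/n!) H_n^μ(λx)`. -/
theorem genHermite_rodrigues (μ : ℝ) (hμ : -(1/2) < μ) (lam : ℂ) (n : ℕ)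
    (x : ℝ) (hx : x ≠ 0) :
    (-1) ^ n * Complex.exp (lam ^ 2 * (x : ℂ) ^ 2) *
        ((dunkl μ)^[n] (fun y : ℝ => Complex.exp (-(lam ^ 2) * (y : ℂ) ^ 2)) x)
      = lam ^ n * ((genGamma μ n : ℂ) / (n ! : ℂ)) * genHermite μ n (lam * x) := by
  rw [iterate_dunkl_gaussian hμ lam n hx, ← neg_one_pow_mul_rodriguesPoly hμ lam n]
  have hexp :
      Complex.exp (lam ^ 2 * (x : ℂ) ^ 2) * Complex.exp (-(lam ^ 2) * (x : ℂ) ^ 2) = 1 := by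
    rw [← Complex.exp_add, ← Complex.exp_zero]
    ring_nf
  linear_combination (-1) ^ n * rodriguesPoly μ lam n x * hexp
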